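/- Equation (22): Let (V, ·, *, ⟨;,⟩) be a 2-dimensional real hyporeductive triple algebra, let u, v be a basis of V, and write ⟨u;u,v⟩ = e·u + f·v and ⟨v;u,v⟩ = k·u + l·v with real numbers e, f, k, l. Then (e + l)·⟨x;u,v⟩ = 0 for x = u and for x = v; equivalently, either l = −e, or ⟨u;u,v⟩ = 0 and ⟨v;u,v⟩ = 0. -/

import Mathlib

/-- A (binary-binary-ternary) triple algebra: a real vector space with two
bilinear skew-symmetric binary operations `mul` (x·y), `star` (x*y) and a
trilinear operation `tri` (⟨x;y,z⟩) skew-symmetric in its last two arguments. -/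
structure TripleAlg (V : Type*) [AddCommGroup V] [Module ℝ V] where
  mul : V → V → V
  star : V → V → V
  tri : V → V → V → V
  mul_add_left : ∀ x y z : V, mul (x + y) z = mul x z + mul y z
  mul_smul_left : ∀ (r : ℝ) (x y : V), mul (r • x) y = r • mul x y
  mul_skew : ∀ x y : V, mul x y = -mul y x
  star_add_left : ∀ x y z : V, star (x + y) z = star x z + star y z
  star_smul_left : ∀ (r : ℝ) (x y : V), star (r • x) y = r • star x y
  star_skew : ∀ x y : V, star x y = -star y x
  tri_add_fst : ∀ x y z w : V, tri (x + y) z w = tri x z w + tri y z w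
  tri_smul_fst : ∀ (r : ℝ) (x z w : V), tri (r • x) z w = r • tri x z w
  tri_add_snd : ∀ x y z w : V, tri x (y + z) w = tri x y w + tri x z w
  tri_smul_snd : ∀ (r : ℝ) (x y w : V), tri x (r • y) w = r • tri x y w
  tri_skew : ∀ x y z : V, tri x y z = -tri x z y

namespace TripleAlg

variable {V : Type*} [AddCommGroup V] [Module ℝ V]

/-- The summand of identity (11), to be summed cyclically over the pairs
(ξ,η), (ζ,κ), (l,m). -/
def term11 (A : TripleAlg V) (ξ η ζ κ l m : V) : V :=
  A.tri (A.tri (A.mul ξ η) ζ κ + A.mul η (A.tri ξ ζ κ) - A.mul ξ (A.tri η ζ κ)) l m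
    + A.tri (A.mul l m) (A.tri η ζ κ) ξ + A.mul m (A.tri l (A.tri η ζ κ) ξ)
    - A.mul l (A.tri m (A.tri η ζ κ) ξ)
    - (A.tri (A.mul l m) (A.tri ξ ζ κ) η + A.mul m (A.tri l (A.tri ξ ζ κ) η)
        - A.mul l (A.tri m (A.tri ξ ζ κ) η))

/-- The summand of identity (12). -/
def term12 (A : TripleAlg V) (ξ η ζ κ l m : V) : V :=
  A.star (A.tri m (A.tri η ζ κ) ξ - A.tri m (A.tri ξ ζ κ) η) l
    + A.star (A.tri l (A.tri ξ ζ κ) η - A.tri l (A.tri η ζ κ) ξ) m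

/-- The summand of identity (13). -/
def term13 (A : TripleAlg V) (θ ξ η ζ κ l m : V) : V :=
  A.tri θ (A.tri m (A.tri η ζ κ) ξ - A.tri m (A.tri ξ ζ κ) η) l
    + A.tri θ (A.tri l (A.tri ξ ζ κ) η - A.tri l (A.tri η ζ κ) ξ) m

/-- The defining identities (2)–(13) of an (abstract) hyporeductive triple
algebra. -/
def IsHTA (A : TripleAlg V) : Prop :=
  -- (2)
  (∀ ξ η ζ : V,
    A.mul ξ (A.mul η ζ) - A.tri ξ η ζ + A.mul η (A.mul ζ ξ) - A.tri η ζ ξ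
      + A.mul ζ (A.mul ξ η) - A.tri ζ ξ η = 0) ∧
  -- (3)
  (∀ ξ η ζ : V,
    A.star ζ (A.mul ξ η) + A.star ξ (A.mul η ζ) + A.star η (A.mul ζ ξ) = 0) ∧
  -- (4)
  (∀ θ ξ η ζ : V,
    A.tri θ ζ (A.mul ξ η) + A.tri θ ξ (A.mul η ζ) + A.tri θ η (A.mul ζ ξ) = 0) ∧
  -- (5)
  (∀ ξ η ζ κ : V,
    A.mul κ (A.tri ζ ξ η) - A.mul ζ (A.tri κ ξ η) + A.tri (A.mul ζ κ) ξ η =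
      A.tri (A.star ξ η) ζ κ - A.tri (A.star ζ κ) ξ η
        + A.star ζ (A.tri κ ξ η) - A.star κ (A.tri ζ ξ η)
        + A.star (A.star ξ η) (A.star ζ κ) + A.mul (A.star ξ η) (A.star ζ κ)) ∧
  -- (6)
  (∀ ξ η ζ κ χ : V,
    A.mul χ (A.mul κ (A.tri ζ ξ η) - A.mul ζ (A.tri κ ξ η) + A.tri (A.mul ζ κ) ξ η)
      + A.tri (A.tri χ ξ η) ζ κ - A.tri (A.tri χ ζ κ) ξ η
      + A.tri χ ζ (A.tri κ ξ η) - A.tri χ κ (A.tri ζ ξ η) = 0) ∧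
  -- (7)
  (∀ ξ η ζ κ χ : V,
    A.star χ (A.mul κ (A.tri ζ ξ η) - A.mul ζ (A.tri κ ξ η) + A.tri (A.mul ζ κ) ξ η) = 0) ∧
  -- (8)
  (∀ ξ η ζ κ θ χ : V,
    A.tri θ χ (A.mul κ (A.tri ζ ξ η) - A.mul ζ (A.tri κ ξ η) + A.tri (A.mul ζ κ) ξ η) = 0) ∧
  -- (9)
  (∀ ξ η ζ κ : V,
    A.mul κ (A.tri ζ ξ η) - A.mul ζ (A.tri κ ξ η) + A.tri (A.mul ζ κ) ξ η
      + A.mul η (A.tri ξ ζ κ) - A.mul ξ (A.tri η ζ κ) + A.tri (A.mul ξ η) ζ κ = 0) ∧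
  -- (10)
  (∀ ξ η ζ κ : V,
    A.star ζ (A.tri κ ξ η) - A.star κ (A.tri ζ ξ η)
      + A.star ξ (A.tri η ζ κ) - A.star η (A.tri ξ ζ κ) = 0) ∧
  -- (11)
  (∀ ξ η ζ κ l m : V,
    A.term11 ξ η ζ κ l m + A.term11 ζ κ l m ξ η + A.term11 l m ξ η ζ κ = 0) ∧
  -- (12)
  (∀ ξ η ζ κ l m : V,
    A.term12 ξ η ζ κ l m + A.term12 ζ κ l m ξ η + A.term12 l m ξ η ζ κ = 0) ∧
  -- (13)
  (∀ θ ξ η ζ κ l m : V,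
    A.term13 θ ξ η ζ κ l m + A.term13 θ ζ κ l m ξ η + A.term13 θ l m ξ η ζ κ = 0)

/-- The expression J(u,v) = u*⟨v;u,v⟩ − v*⟨u;u,v⟩. -/
def J (A : TripleAlg V) (u v : V) : V :=
  A.star u (A.tri v u v) - A.star v (A.tri u u v)

lemma mul_zero_left (A : TripleAlg V) (y : V) : A.mul 0 y = 0 := by
  have := A.mul_smul_left 0 0 y; simpa using this

lemma mul_zero_right (A : TripleAlg V) (x : V) : A.mul x 0 = 0 := by
  rw [A.mul_skew, A.mul_zero_left, neg_zero]

lemma tri_add_thd (A : TripleAlg V) (x y a b : V) :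
    A.tri x y (a + b) = A.tri x y a + A.tri x y b := by
  rw [A.tri_skew, A.tri_add_snd, A.tri_skew x a y, A.tri_skew x b y]; abel

lemma tri_smul_thd (A : TripleAlg V) (r : ℝ) (x y a : V) :
    A.tri x y (r • a) = r • A.tri x y a := by
  rw [A.tri_skew, A.tri_smul_snd, A.tri_skew x a y, smul_neg, neg_neg]

lemma tri_same (A : TripleAlg V) (x y : V) : A.tri x y y = 0 := by
  have h := A.tri_skew x y y
  have h2 : (2 : ℝ) • A.tri x y y = 0 := by rw [two_smul]; nth_rewrite 1 [h]; abel
  simpa using h2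

end TripleAlg

/-- Equation (22): in a 2-dimensional real h.t.a. with basis u, v and
⟨u;u,v⟩ = e•u + f•v, ⟨v;u,v⟩ = k•u + l•v, one has (e + l) • ⟨x;u,v⟩ = 0 for
x = u and x = v; equivalently, either l = −e, or ⟨u;u,v⟩ = 0 and ⟨v;u,v⟩ = 0. -/
theorem equation_22 {V : Type*} [AddCommGroup V] [Module ℝ V]
    (hdim : Module.finrank ℝ V = 2) (A : TripleAlg V) (hA : A.IsHTA)
    (B : Module.Basis (Fin 2) ℝ V) (e f k l : ℝ)
    (htu : A.tri (B 0) (B 0) (B 1) = e • B 0 + f • B 1)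
    (htv : A.tri (B 1) (B 0) (B 1) = k • B 0 + l • B 1) :
    ((e + l) • A.tri (B 0) (B 0) (B 1) = 0 ∧
      (e + l) • A.tri (B 1) (B 0) (B 1) = 0) ∧
    (l = -e ∨ (A.tri (B 0) (B 0) (B 1) = 0 ∧ A.tri (B 1) (B 0) (B 1) = 0)) := by
  obtain ⟨_, _, _, _, h6, _, _, h9, _⟩ := hA
  set u := B 0
  set v := B 1
  set D := A.mul v (A.tri u u v) - A.mul u (A.tri v u v) + A.tri (A.mul u v) u v with hD
  have hD0 : D = 0 := by
    have h := h9 u v u v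
    have h2 : (2 : ℝ) • D = 0 := by rw [two_smul, hD]; rw [← h]; abel
    simpa using h2
  have key : ∀ χ : V, (e + l) • A.tri χ u v = 0 := by
    intro χ
    have h := h6 u v u v χ
    rw [show A.mul v (A.tri u u v) - A.mul u (A.tri v u v) + A.tri (A.mul u v) u v = D
      from rfl, hD0, A.mul_zero_right, htu, htv] at h
    rw [A.tri_add_thd, A.tri_add_thd, A.tri_smul_thd, A.tri_smul_thd, A.tri_smul_thd,
      A.tri_smul_thd, A.tri_same, A.tri_same, A.tri_skew χ v u] at h
    have h2 : l • A.tri χ u v + e • A.tri χ u v = 0 := by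
      simpa [smul_neg, sub_eq_add_neg, add_assoc] using h
    rw [add_smul, add_comm]
    exact h2
  constructor
  · exact ⟨key u, key v⟩
  · by_cases hel : e + l = 0
    · exact Or.inl (by linarith)
    · refine Or.inr ⟨?_, ?_⟩
      · have := key u; rcases smul_eq_zero.mp this with h | h
        · exact absurd h hel
        · exact h
      · have := key v; rcases smul_eq_zero.mp this with h | h
        · exact absurd h hel
        · exact h
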